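/- arXiv:1203.3958 — 2 statements merged into one kernel-verified Lean document; each statement's English description precedes it below -/
import Mathlib

section
/- Let A be a finite-dimensional complex C*-algebra with a faithful tracial state τ, let B ⊆ A be a unital *-subalgebra, and let E : A → B be the trace-preserving conditional expectation, i.e., a linear map satisfying E(b) = b for all b ∈ B, τ(E(a)) = τ(a) for all a ∈ A, E(b·a·b') = b·E(a)·b' for all b,b' ∈ B and a ∈ A, and E(x) ≥ 0 whenever x ≥ 0. Let p ∈ B be a projection (p = p* = p²), and let (u_α)_{α∈F} be an orthonormal basis, with respect to ⟨x,y⟩ = τ(x* y), of the left ideal A·p = { a·p : a ∈ A }. Then the element z := Σ_{α∈F} E(u_α* · u_α) lies in the corner p·B·p, is positive, and is invertible in the corner: there exists v ∈ p·B·p with v·z = z·v = p. -/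
open scoped ComplexOrder

/-!
Write `z = ∑ α, E (u α⋆ u α)`. For `x` in the corner `p B p`, the bimodule property and trace
preservation of `E` give `τ (x⋆ z x) = ∑ α, τ ((u α x)⋆ (u α x))`. So if `z x = 0`, faithfulness of
`τ` kills every `u α x`; as the `u α` span `A p ∋ x⋆`, also `x⋆ x = 0`, whence `x = 0`. Thus left
multiplication by `z` is injective, hence bijective, on the finite-dimensional corner, which
produces the inverse of `z` there. Positivity holds because positive elements form a cone.
-/

section Corner

variable {R A : Type*} [CommSemiring R] [Semiring A] [Algebra R A]

def corner (B : Subalgebra R A) (p : A) : Submodule R A :=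
  (Subalgebra.toSubmodule B).map ((LinearMap.mulRight R p).comp (LinearMap.mulLeft R p))

variable {B : Subalgebra R A} {p x y : A}

lemma mem_corner : x ∈ corner B p ↔ ∃ b ∈ B, x = p * b * p := by
  simp only [corner, Submodule.mem_map, Subalgebra.mem_toSubmodule, LinearMap.comp_apply,
    LinearMap.mulLeft_apply, LinearMap.mulRight_apply, eq_comm]

lemma mem_of_mem_corner (hpB : p ∈ B) (hx : x ∈ corner B p) : x ∈ B := by
  obtain ⟨b, hb, rfl⟩ := mem_corner.mp hx
  exact mul_mem (mul_mem hpB hb) hpB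

lemma self_mem_corner (hp : IsIdempotentElem p) : p ∈ corner B p :=
  mem_corner.mpr ⟨1, one_mem B, by rw [mul_one, hp.eq]⟩

lemma mul_mem_corner (hpB : p ∈ B) (hx : x ∈ corner B p) (hy : y ∈ corner B p) :
    x * y ∈ corner B p := by
  obtain ⟨b, hb, rfl⟩ := mem_corner.mp hx
  obtain ⟨c, hc, rfl⟩ := mem_corner.mp hy
  exact mem_corner.mpr ⟨b * p * p * c, mul_mem (mul_mem (mul_mem hb hpB) hpB) hc, by
    simp only [mul_assoc]⟩

lemma idem_mul_of_mem_corner (hp : IsIdempotentElem p) (hx : x ∈ corner B p) : p * x = x := by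
  obtain ⟨b, -, rfl⟩ := mem_corner.mp hx
  rw [← mul_assoc, ← mul_assoc, hp.eq]

lemma mul_idem_of_mem_corner (hp : IsIdempotentElem p) (hx : x ∈ corner B p) : x * p = x := by
  obtain ⟨b, -, rfl⟩ := mem_corner.mp hx
  rw [mul_assoc, hp.eq]

end Corner

lemma exists_inverse_in_corner {K A : Type*} [Field K] [Ring A] [Algebra K A]
    [FiniteDimensional K A] {B : Subalgebra K A} {p z : A} (hpB : p ∈ B)
    (hp : IsIdempotentElem p) (hz : z ∈ corner B p)
    (hinj : ∀ x ∈ corner B p, z * x = 0 → x = 0) :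
    ∃ v ∈ corner B p, v * z = p ∧ z * v = p := by
  let L : corner B p →ₗ[K] corner B p :=
    (LinearMap.mulLeft K z).restrict fun x hx => mul_mem_corner hpB hz hx
  have hL : Function.Injective L := by
    rw [← LinearMap.ker_eq_bot, LinearMap.ker_eq_bot']
    exact fun x hx => Subtype.ext (hinj x x.2 (congrArg Subtype.val hx))
  obtain ⟨⟨v, hv⟩, hzv⟩ := LinearMap.injective_iff_surjective.mp hL ⟨p, self_mem_corner hp⟩
  have hzv : z * v = p := congrArg Subtype.val hzv
  refine ⟨v, hv, ?_, hzv⟩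
  have hvz : v * z - p ∈ corner B p := sub_mem (mul_mem_corner hpB hv hz) (self_mem_corner hp)
  refine sub_eq_zero.mp (hinj _ hvz ?_)
  rw [mul_sub, ← mul_assoc, hzv, idem_mul_of_mem_corner hp hz, mul_idem_of_mem_corner hp hz,
    sub_self]

lemma mul_eq_zero_of_mem_of_basis {R A F : Type*} [CommSemiring R] [Semiring A] [Algebra R A]
    {M : Submodule R A} (u : Module.Basis F R M) {w x : A} (hw : w ∈ M)
    (hu : ∀ α, (u α : A) * x = 0) : w * x = 0 := by
  have h : (LinearMap.mulRight R x).comp M.subtype = 0 := u.ext fun α => hu α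
  exact LinearMap.congr_fun h ⟨w, hw⟩

lemma CStarAlgebra.exists_sum_eq_star_mul_self {A ι : Type*} [CStarAlgebra A] [PartialOrder A]
    [StarOrderedRing A] (s : Finset ι) (x : ι → A) (hx : ∀ i ∈ s, ∃ y, x i = star y * y) :
    ∃ y, ∑ i ∈ s, x i = star y * y :=
  CStarAlgebra.nonneg_iff_eq_star_mul_self.mp <|
    Finset.sum_nonneg fun i hi => CStarAlgebra.nonneg_iff_eq_star_mul_self.mpr (hx i hi)

section Expectation

variable {A F : Type*} [Ring A] [StarRing A] [Algebra ℂ A] [StarModule ℂ A] [Fintype F]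
  {τ : A →ₗ[ℂ] ℂ} {B : StarSubalgebra ℂ A} {E : A →ₗ[ℂ] A}

lemma trace_star_mul_sum_mul (hE_tr : ∀ a : A, τ (E a) = τ a)
    (hE_bimod : ∀ b ∈ B, ∀ b' ∈ B, ∀ a : A, E (b * a * b') = b * E a * b')
    (u : F → A) {x : A} (hx : x ∈ B) :
    τ (star x * (∑ α, E (star (u α) * u α)) * x) = ∑ α, τ (star (u α * x) * (u α * x)) := by
  rw [Finset.mul_sum, Finset.sum_mul, map_sum]
  refine Finset.sum_congr rfl fun α _ => ?_
  rw [← hE_bimod _ (star_mem hx) _ hx, hE_tr, star_mul, mul_assoc, mul_assoc, mul_assoc]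

lemma star_mem_range_mulRight_of_mem_corner {p x : A} (hp_star : star p = p)
    (hx : x ∈ corner B.toSubalgebra p) : star x ∈ LinearMap.range (LinearMap.mulRight ℂ p) := by
  obtain ⟨b, -, rfl⟩ := mem_corner.mp hx
  exact ⟨p * star b, by simp only [LinearMap.mulRight_apply, star_mul, hp_star, mul_assoc]⟩

lemma eq_zero_of_mem_corner_of_sum_mul_eq_zero
    (hτpos : ∀ a : A, 0 ≤ τ (star a * a)) (hτfaith : ∀ a : A, τ (star a * a) = 0 → a = 0)
    (hE_tr : ∀ a : A, τ (E a) = τ a)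
    (hE_bimod : ∀ b ∈ B, ∀ b' ∈ B, ∀ a : A, E (b * a * b') = b * E a * b')
    {p : A} (hpB : p ∈ B) (hp_star : star p = p)
    (u : Module.Basis F ℂ (LinearMap.range (LinearMap.mulRight ℂ p)))
    {x : A} (hx : x ∈ corner B.toSubalgebra p)
    (hzx : (∑ α, E (star (u α : A) * (u α : A))) * x = 0) : x = 0 := by
  have hsum : ∑ α, τ (star ((u α : A) * x) * ((u α : A) * x)) = 0 := by
    rw [← trace_star_mul_sum_mul hE_tr hE_bimod _ (mem_of_mem_corner hpB hx), mul_assoc, hzx,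
      mul_zero, map_zero]
  have hux : ∀ α, (u α : A) * x = 0 := fun α =>
    hτfaith _ ((Finset.sum_eq_zero_iff_of_nonneg fun α _ => hτpos _).mp hsum α
      (Finset.mem_univ α))
  refine hτfaith x ?_
  rw [mul_eq_zero_of_mem_of_basis u (star_mem_range_mulRight_of_mem_corner hp_star hx) hux,
    map_zero]

end Expectation

theorem stmt_5_general
    (A : Type*) [NormedRing A] [StarRing A] [CStarRing A]
    [NormedAlgebra ℂ A] [StarModule ℂ A] [CompleteSpace A] [FiniteDimensional ℂ A]
    (τ : A →ₗ[ℂ] ℂ)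
    (hτpos : ∀ a : A, 0 ≤ τ (star a * a))
    (hτfaith : ∀ a : A, τ (star a * a) = 0 → a = 0)
    (B : StarSubalgebra ℂ A)
    (E : A →ₗ[ℂ] A)
    (hE_mem : ∀ a : A, E a ∈ B)
    (hE_tr : ∀ a : A, τ (E a) = τ a)
    (hE_bimod : ∀ b ∈ B, ∀ b' ∈ B, ∀ a : A, E (b * a * b') = b * E a * b')
    (hE_pos : ∀ x : A, (∃ y : A, x = star y * y) → ∃ y : A, E x = star y * y)
    (p : A) (hpB : p ∈ B) (hp_star : star p = p) (hp_idem : p * p = p)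
    (F : Type*) [Fintype F]
    (u : Module.Basis F ℂ (LinearMap.range (LinearMap.mulRight ℂ p))) :
    (∃ b ∈ B, ∑ α : F, E (star (u α : A) * (u α : A)) = p * b * p) ∧
    (∃ y : A, ∑ α : F, E (star (u α : A) * (u α : A)) = star y * y) ∧
    (∃ v : A, (∃ b ∈ B, v = p * b * p) ∧
      v * ∑ α : F, E (star (u α : A) * (u α : A)) = p ∧
      (∑ α : F, E (star (u α : A) * (u α : A))) * v = p) := by
  set z := ∑ α : F, E (star (u α : A) * (u α : A))
  have hp : IsIdempotentElem p := hp_idem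
  have hu_corner : ∀ α, p * (star (u α : A) * (u α : A)) * p = star (u α : A) * (u α : A) := by
    intro α
    have hup : (u α : A) * p = u α := by
      obtain ⟨a, ha⟩ := (u α).2
      rw [← ha, LinearMap.mulRight_apply, mul_assoc, hp.eq]
    calc p * (star (u α : A) * (u α : A)) * p = star ((u α : A) * p) * ((u α : A) * p) := by
          simp only [star_mul, hp_star, mul_assoc]
      _ = star (u α : A) * (u α : A) := by rw [hup]
  have hz : z = p * z * p := by
    simp only [z, Finset.mul_sum, Finset.sum_mul, ← hE_bimod p hpB p hpB, hu_corner]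
  have hz_corner : z ∈ corner B.toSubalgebra p :=
    mem_corner.mpr ⟨z, sum_mem fun α _ => hE_mem _, hz⟩
  obtain ⟨v, hv, hvz, hzv⟩ := exists_inverse_in_corner hpB hp hz_corner fun x hx =>
    eq_zero_of_mem_corner_of_sum_mul_eq_zero hτpos hτfaith hE_tr hE_bimod hpB hp_star u hx
  let _ : CStarAlgebra A := { }
  let _ := CStarAlgebra.spectralOrder A
  have := CStarAlgebra.spectralOrderedRing A
  exact ⟨mem_corner.mp hz_corner,
    CStarAlgebra.exists_sum_eq_star_mul_self _ _ fun α _ => hE_pos _ ⟨_, rfl⟩,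
    v, mem_corner.mp hv, hvz, hzv⟩

/-- For a trace-preserving conditional expectation `E : A → B` onto a unital
*-subalgebra of a finite-dimensional C*-algebra, a projection `p ∈ B`, and an
orthonormal basis `u` of the left ideal `A·p`, the element
`z := ∑ α, E ((u α)* * u α)` lies in the corner `p·B·p`, is positive, and is
invertible in the corner. -/
theorem stmt_5
    (A : Type*) [NormedRing A] [StarRing A] [CStarRing A]
    [NormedAlgebra ℂ A] [StarModule ℂ A] [CompleteSpace A] [FiniteDimensional ℂ A]
    (τ : A →ₗ[ℂ] ℂ)
    (hτ1 : τ 1 = 1)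
    (hτtr : ∀ a b : A, τ (a * b) = τ (b * a))
    (hτpos : ∀ a : A, 0 ≤ τ (star a * a))
    (hτfaith : ∀ a : A, τ (star a * a) = 0 → a = 0)
    (B : StarSubalgebra ℂ A)
    (E : A →ₗ[ℂ] A)
    (hE_mem : ∀ a : A, E a ∈ B)
    (hE_id : ∀ b ∈ B, E b = b)
    (hE_tr : ∀ a : A, τ (E a) = τ a)
    (hE_bimod : ∀ b ∈ B, ∀ b' ∈ B, ∀ a : A, E (b * a * b') = b * E a * b')
    (hE_pos : ∀ x : A, (∃ y : A, x = star y * y) → ∃ y : A, E x = star y * y)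
    (p : A) (hpB : p ∈ B) (hp_star : star p = p) (hp_idem : p * p = p)
    (F : Type*) [Fintype F] [DecidableEq F]
    (u : Module.Basis F ℂ (LinearMap.range (LinearMap.mulRight ℂ p)))
    (hu : ∀ α β : F, τ (star ((u α : A)) * (u β : A)) = if α = β then 1 else 0) :
    (∃ b ∈ B, ∑ α : F, E (star (u α : A) * (u α : A)) = p * b * p) ∧
    (∃ y : A, ∑ α : F, E (star (u α : A) * (u α : A)) = star y * y) ∧
    (∃ v : A, (∃ b ∈ B, v = p * b * p) ∧
      v * ∑ α : F, E (star (u α : A) * (u α : A)) = p ∧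
      (∑ α : F, E (star (u α : A) * (u α : A))) * v = p) :=
  stmt_5_general A τ hτpos hτfaith B E hE_mem hE_tr hE_bimod hE_pos p hpB hp_star hp_idem F u
end

section
/- Let V be a complex inner product space and (V_m)_{m∈ℕ} an increasing sequence of finite-dimensional subspaces of V with V = ⋃_{m∈ℕ} V_m. For each m set W_m := V_m ∩ V_{m-1}^⊥ (with V_{-1} := {0}), the orthogonal complement of V_{m-1} inside V_m. Then the map K from the product ∏_{m∈ℕ} W_m to the algebraic dual of V (the space of all linear functionals V → ℂ), defined by K(s)(a) := ⟨ Σ_{n=0}^{m} s_n , a ⟩ whenever a ∈ V_m, is well defined (the value is independent of the choice of m with a ∈ V_m) and is a bijection from ∏_{m∈ℕ} W_m onto the algebraic dual of V. -/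
/-!
The partial sums `v m = s 0 + ⋯ + s m` of `s ∈ ∏ W m` are exactly the sequences `v m ∈ V m`
whose successive differences are orthogonal to `V m`, i.e. for which the functionals `⟪v m, ·⟫`
on the `V m` are compatible; compatible functionals glue to a functional on `V = ⋃ V m`.
Conversely, by the Riesz representation on each finite-dimensional `V m`, every functional on `V`
restricts to such a compatible family.
-/

open scoped InnerProductSpace

section Exhaustion

variable {𝕜 V : Type*} [RCLike 𝕜] [NormedAddCommGroup V] [InnerProductSpace 𝕜 V]
  {Vm W : ℕ → Submodule 𝕜 V}

theorem eq_of_forall_inner_eq_of_mem {U : Submodule 𝕜 V} {u w : V} (hu : u ∈ U) (hw : w ∈ U)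
    (h : ∀ a ∈ U, ⟪u, a⟫_𝕜 = ⟪w, a⟫_𝕜) : u = w := by
  have hmem : u - w ∈ U ⊓ Uᗮ :=
    ⟨U.sub_mem hu hw, (U.mem_orthogonal' _).2 fun a ha => by rw [inner_sub_left, h a ha, sub_self]⟩
  rwa [U.inf_orthogonal_eq_bot, Submodule.mem_bot, sub_eq_zero] at hmem

theorem exists_mem_inner_eq_of_finiteDimensional (U : Submodule 𝕜 V) [FiniteDimensional 𝕜 U]
    (φ : Module.Dual 𝕜 V) : ∃ v ∈ U, ∀ a ∈ U, ⟪v, a⟫_𝕜 = φ a :=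
  let v : U := (InnerProductSpace.toDual 𝕜 U).symm (φ.comp U.subtype).toContinuousLinearMap
  ⟨v, v.2, fun a ha => InnerProductSpace.toDual_symm_apply (x := (⟨a, ha⟩ : U))⟩

theorem exists_dual_eq_inner_of_compatible (hmono : Monotone Vm) (hunion : ∀ a, ∃ m, a ∈ Vm m)
    (v : ℕ → V) (hv : ∀ {m m' a}, a ∈ Vm m → m ≤ m' → ⟪v m', a⟫_𝕜 = ⟪v m, a⟫_𝕜) :
    ∃ f : Module.Dual 𝕜 V, ∀ m, ∀ a ∈ Vm m, f a = ⟪v m, a⟫_𝕜 := by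
  classical
  let g (a : V) : 𝕜 := ⟪v (Nat.find (hunion a)), a⟫_𝕜
  have hg {m a} (ha : a ∈ Vm m) : g a = ⟪v m, a⟫_𝕜 := by
    change ⟪v _, a⟫_𝕜 = _
    rw [← hv (Nat.find_spec (hunion a)) (le_max_left _ m), hv ha (le_max_right _ _)]
  refine ⟨{ toFun := g, map_add' := fun a b => ?_, map_smul' := fun c a => ?_ }, fun m a => hg⟩
  · obtain ⟨ma, ha⟩ := hunion a
    obtain ⟨mb, hb⟩ := hunion b
    have ha' := hmono (le_max_left ma mb) ha
    have hb' := hmono (le_max_right ma mb) hb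
    rw [hg (add_mem ha' hb'), hg ha', hg hb', inner_add_right]
  · obtain ⟨m, ha⟩ := hunion a
    rw [RingHom.id_apply, smul_eq_mul, hg ha, hg (Submodule.smul_mem _ c ha), inner_smul_right]

def partialSum (s : ∀ m, W m) (m : ℕ) : V := ∑ n ∈ Finset.range (m + 1), (s n : V)

@[simp]
theorem partialSum_zero (s : ∀ m, W m) : partialSum s 0 = s 0 := by
  simp [partialSum]

theorem partialSum_succ (s : ∀ m, W m) (m : ℕ) :
    partialSum s (m + 1) = partialSum s m + s (m + 1) :=
  Finset.sum_range_succ _ _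

theorem partialSum_injective : Function.Injective (partialSum (W := W)) := by
  intro s t hst
  funext m
  apply Subtype.ext
  cases m with
  | zero => simpa using congrFun hst 0
  | succ m =>
    have h := congrFun hst (m + 1)
    rwa [partialSum_succ, partialSum_succ, congrFun hst m, add_right_inj] at h

theorem partialSum_mem (hmono : Monotone Vm) (hW : ∀ m, W m ≤ Vm m) (s : ∀ m, W m) (m : ℕ) :
    partialSum s m ∈ Vm m :=
  Submodule.sum_mem _ fun n hn =>
    hmono (Nat.lt_succ_iff.mp (Finset.mem_range.mp hn)) (hW n (s n).2)

theorem inner_partialSum_of_le (hmono : Monotone Vm) (hW : ∀ m, W (m + 1) ≤ (Vm m)ᗮ)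
    (s : ∀ m, W m) {m m' : ℕ} {a : V} (ha : a ∈ Vm m) (hm : m ≤ m') :
    ⟪partialSum s m', a⟫_𝕜 = ⟪partialSum s m, a⟫_𝕜 := by
  induction m', hm using Nat.le_induction with
  | base => rfl
  | succ k hk ih =>
    rw [partialSum_succ, inner_add_left, ih,
      (Submodule.mem_orthogonal' _ _).1 (hW k (s (k + 1)).2) a (hmono hk ha), add_zero]

theorem exists_partialSum_eq (hmono : Monotone Vm) (hW0 : W 0 = Vm 0)
    (hWs : ∀ m, W (m + 1) = Vm (m + 1) ⊓ (Vm m)ᗮ)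
    (v : ℕ → V) (hv : ∀ m, v m ∈ Vm m) (hdiff : ∀ m, v (m + 1) - v m ∈ (Vm m)ᗮ) :
    ∃ s : ∀ m, W m, partialSum s = v := by
  have hdiffW (m : ℕ) : v (m + 1) - v m ∈ W (m + 1) := by
    rw [hWs]
    exact ⟨(Vm (m + 1)).sub_mem (hv (m + 1)) (hmono m.le_succ (hv m)), hdiff m⟩
  refine ⟨fun | 0 => ⟨v 0, hW0 ▸ hv 0⟩ | m + 1 => ⟨_, hdiffW m⟩, funext fun m => ?_⟩
  induction m with
  | zero => simp
  | succ m ih => rw [partialSum_succ, ih]; simp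

end Exhaustion

/-- Given an exhausting increasing sequence of finite-dimensional subspaces
`Vm` of a complex inner product space `V`, with `W 0 = Vm 0` and
`W (m+1) = Vm (m+1) ⊓ (Vm m)ᗮ`, the map `K` sending `s ∈ ∏ m, W m` to the linear
functional `a ↦ ⟨∑_{n ≤ m} s n, a⟩` (for any `m` with `a ∈ Vm m`) is well defined
and is a bijection onto the algebraic dual of `V`. -/
theorem stmt_6
    (V : Type*) [NormedAddCommGroup V] [InnerProductSpace ℂ V]
    (Vm : ℕ → Submodule ℂ V)
    (hmono : Monotone Vm)
    (hfd : ∀ m : ℕ, FiniteDimensional ℂ (Vm m))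
    (hunion : ∀ v : V, ∃ m : ℕ, v ∈ Vm m)
    (W : ℕ → Submodule ℂ V)
    (hW0 : W 0 = Vm 0)
    (hWs : ∀ m : ℕ, W (m + 1) = Vm (m + 1) ⊓ (Vm m)ᗮ) :
    ∃! K : (∀ m : ℕ, W m) → Module.Dual ℂ V,
      (∀ (s : ∀ m : ℕ, W m) (m : ℕ) (a : V), a ∈ Vm m →
        K s a = inner ℂ (∑ n ∈ Finset.range (m + 1), ((s n : V))) a) ∧
      Function.Bijective K := by
  have hWle (m : ℕ) : W m ≤ Vm m := by
    cases m with
    | zero => exact hW0.le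
    | succ m => exact hWs m ▸ inf_le_left
  have hWorth (m : ℕ) : W (m + 1) ≤ (Vm m)ᗮ := hWs m ▸ inf_le_right
  choose K hK using fun s : ∀ m, W m =>
    exists_dual_eq_inner_of_compatible hmono hunion _ (inner_partialSum_of_le hmono hWorth s)
  have hext {f g : Module.Dual ℂ V} (h : ∀ m, ∀ a ∈ Vm m, f a = g a) : f = g :=
    LinearMap.ext fun a => (hunion a).elim fun m ha => h m a ha
  refine ⟨K, ⟨hK, fun s t hst => partialSum_injective (funext fun m => ?_), fun φ => ?_⟩,
    fun K' hK' => funext fun s => hext fun m a ha => (hK'.1 s m a ha).trans (hK s m a ha).symm⟩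
  · exact eq_of_forall_inner_eq_of_mem (partialSum_mem hmono hWle s m)
      (partialSum_mem hmono hWle t m) fun a ha => by rw [← hK s m a ha, ← hK t m a ha, hst]
  · choose v hv hvφ using fun m => exists_mem_inner_eq_of_finiteDimensional (Vm m) φ
    have hdiff (m : ℕ) : v (m + 1) - v m ∈ (Vm m)ᗮ :=
      (Submodule.mem_orthogonal' _ _).2 fun a ha => by
        rw [inner_sub_left, hvφ m a ha, hvφ (m + 1) a (hmono m.le_succ ha), sub_self]
    obtain ⟨s, hs⟩ := exists_partialSum_eq hmono hW0 hWs v hv hdiff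
    exact ⟨s, hext fun m a ha => by rw [hK s m a ha, hs, hvφ m a ha]⟩
end
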